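/- arXiv:1209.4565 — 7 statements merged into one kernel-verified Lean document; each statement's English description precedes it below -/
import Mathlib

section
/- Let n ≥ 2 and let x = (x_2,…,x_{2n−1}) be nonzero complex numbers such that T_k(x) ≠ 0 for 1 ≤ k ≤ n−1. Define y(x) = (y_1,…,y_{2n−2}) by y_1 = T_1(x)^{−1}, y_k = x_k·T_k(x)^{−1} for 2 ≤ k ≤ n−1, y_n = 1/x_n, and y_{n+l} = (x_{n+l}/x_n)·T_l(x) for 1 ≤ l ≤ n−2. Then for every pair 1 ≤ i < j ≤ n+1 one has Y_{ij}(y(x)) = (1/x_n)·X_{ij}(x). -/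
/-!
Both coefficient families are governed by telescoping sums. On the `x` side,
`x_m / x_{n+m-1} = T_{m-1} - T_m`, so `∑_{m=a+1}^{b} x_m / x_{n+m-1} = T_a - T_b`. On the `y` side,
the definition of `y(x)` is made so that `y_m / y_{n+m-1} = x_n (T_m⁻¹ - T_{m-1}⁻¹)`, hence
`∑_{m=a+1}^{b} y_m / y_{n+m-1} = x_n (T_b⁻¹ - T_a⁻¹)`. Substituting both closed forms, each of the
cases in the definitions of `X_{ij}` and `Y_{ij}` becomes a rational identity in the `T_k`.
-/

noncomputable section

/-- `Tf n x k = ∑_{j=k+1}^{n} x_j / x_{n+j-1}` (so `Tf n x n = 0`). -/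
def Tf (n : ℕ) (x : ℕ → ℂ) (k : ℕ) : ℂ :=
  ∑ j ∈ Finset.Icc (k + 1) n, x j / x (n + j - 1)

/-- The coefficients `X_{ij}(x)` for `1 ≤ i < j ≤ n+1`. -/
def Xc (n : ℕ) (x : ℕ → ℂ) (i j : ℕ) : ℂ :=
  if j = n + 1 then (if i = n then 1 else x (n + i))
  else if j = n then x (i + 1) + x (n + i) * ∑ m ∈ Finset.Icc (i + 2) n, x m / x (n + m - 1)
  else x (n + j) * (x (i + 1) + x (n + i) * ∑ m ∈ Finset.Icc (i + 2) j, x m / x (n + m - 1))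

/-- The coefficients `Y_{ij}(y)` for `1 ≤ i < j ≤ n+1`. -/
def Yc (n : ℕ) (y : ℕ → ℂ) (i j : ℕ) : ℂ :=
  if j = n + 1 then
    (if i = n then y n
     else if i = n - 1 then y 1 + y n * ∑ m ∈ Finset.Icc 2 (n - 1), y m / y (n + m - 1)
     else y (n + i) * (y 1 + y n * ∑ m ∈ Finset.Icc 2 i, y m / y (n + m - 1)))
  else if j = n then (if i = n - 1 then 1 else y (n + i))
  else if j = n - 1 then
    y (i + 1) + y (n + i) * ∑ m ∈ Finset.Icc (i + 2) (n - 1), y m / y (n + m - 1)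
  else y (n + j) * (y (i + 1) + y (n + i) * ∑ m ∈ Finset.Icc (i + 2) j, y m / y (n + m - 1))

/-- The map `x ↦ y(x)`:
`y_1 = T_1(x)⁻¹`, `y_k = x_k·T_k(x)⁻¹` for `2 ≤ k ≤ n-1`, `y_n = x_n⁻¹`,
`y_{n+l} = (x_{n+l}/x_n)·T_l(x)` for `1 ≤ l ≤ n-2`. -/
def yOf (n : ℕ) (x : ℕ → ℂ) (k : ℕ) : ℂ :=
  if k = 1 then (Tf n x 1)⁻¹
  else if k ≤ n - 1 then x k * (Tf n x k)⁻¹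
  else if k = n then (x n)⁻¹
  else (x k / x n) * Tf n x (k - n)

open Finset

section
variable (n : ℕ) (x : ℕ → ℂ)

lemma Tf_self : Tf n x n = 0 := by
  simp [Tf]

lemma sum_Icc_div_eq_Tf_sub {a b : ℕ} (hab : a ≤ b) (hb : b ≤ n) :
    ∑ m ∈ Icc (a + 1) b, x m / x (n + m - 1) = Tf n x a - Tf n x b := by
  simp only [Tf, Icc_add_one_left_eq_Ioc]
  rw [← sum_Ioc_consecutive _ hab hb, add_sub_cancel_right]

lemma Tf_sub_Tf_succ {a : ℕ} (ha : a < n) :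
    Tf n x a - Tf n x (a + 1) = x (a + 1) / x (n + a) := by
  rw [← sum_Icc_div_eq_Tf_sub n x a.le_succ ha, Icc_self, sum_singleton,
    Nat.add_sub_assoc le_add_self, Nat.add_sub_cancel]

lemma mul_Tf_sub_Tf_succ {a : ℕ} (ha : a < n) (hx : x (n + a) ≠ 0) :
    x (n + a) * (Tf n x a - Tf n x (a + 1)) = x (a + 1) := by
  rw [Tf_sub_Tf_succ n x ha, mul_div_cancel₀ _ hx]

lemma Tf_pred (hn : 1 ≤ n) : Tf n x (n - 1) = x n / x (n + (n - 1)) := by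
  have h := Tf_sub_Tf_succ n x (a := n - 1) (by omega)
  rwa [Nat.sub_add_cancel hn, Tf_self, sub_zero] at h

lemma yOf_one : yOf n x 1 = (Tf n x 1)⁻¹ :=
  if_pos rfl

lemma yOf_of_two_le {k : ℕ} (hk : 2 ≤ k) (hkn : k ≤ n - 1) : yOf n x k = x k / Tf n x k := by
  rw [yOf, if_neg (by omega), if_pos hkn, div_eq_mul_inv]

lemma yOf_self (hn : 2 ≤ n) : yOf n x n = (x n)⁻¹ := by
  rw [yOf, if_neg (by omega), if_neg (by omega), if_pos rfl]

lemma yOf_add {l : ℕ} (hn : 0 < n) (hl : 1 ≤ l) :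
    yOf n x (n + l) = x (n + l) / x n * Tf n x l := by
  rw [yOf, if_neg (by omega), if_neg (by omega), if_neg (by omega), Nat.add_sub_cancel_left]

lemma yOf_succ_div_yOf {k : ℕ} (hk : 1 ≤ k) (hkn : k + 1 ≤ n - 1) (hTk : Tf n x k ≠ 0)
    (hTk' : Tf n x (k + 1) ≠ 0) :
    yOf n x (k + 1) / yOf n x (n + k) = x n * ((Tf n x (k + 1))⁻¹ - (Tf n x k)⁻¹) := by
  calc yOf n x (k + 1) / yOf n x (n + k)
      = x n * (x (k + 1) / x (n + k)) / (Tf n x k * Tf n x (k + 1)) := by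
        rw [yOf_of_two_le n x (by omega) hkn, yOf_add n x (by omega) hk]
        simp only [div_eq_mul_inv, mul_inv, inv_inv]
        ring
    _ = x n * (Tf n x k - Tf n x (k + 1)) / (Tf n x k * Tf n x (k + 1)) := by
        rw [Tf_sub_Tf_succ n x (by omega)]
    _ = x n * ((Tf n x (k + 1))⁻¹ - (Tf n x k)⁻¹) := by
        field_simp

lemma sum_Icc_yOf_div {a b : ℕ} (ha : 1 ≤ a) (hab : a ≤ b) (hb : b ≤ n - 1)
    (hT : ∀ k, 1 ≤ k → k ≤ n - 1 → Tf n x k ≠ 0) :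
    ∑ m ∈ Icc (a + 1) b, yOf n x m / yOf n x (n + m - 1)
      = x n * ((Tf n x b)⁻¹ - (Tf n x a)⁻¹) := by
  rw [← Ico_add_one_right_eq_Icc, ← sum_Ico_add', ← sum_Ico_sub (fun k => (Tf n x k)⁻¹) hab,
    mul_sum]
  refine sum_congr rfl fun k hk => ?_
  obtain ⟨hak, hkb⟩ := mem_Ico.mp hk
  rw [Nat.add_sub_assoc le_add_self, Nat.add_sub_cancel,
    yOf_succ_div_yOf n x (by omega) (by omega) (hT k (by omega) (by omega))
      (hT (k + 1) (by omega) (by omega))]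

lemma add_mul_sum_Icc_div {i j : ℕ} (hij : i < j) (hj : j ≤ n) (hx : x (n + i) ≠ 0) :
    x (i + 1) + x (n + i) * ∑ m ∈ Icc (i + 2) j, x m / x (n + m - 1)
      = x (n + i) * (Tf n x i - Tf n x j) := by
  rw [sum_Icc_div_eq_Tf_sub n x (a := i + 1) hij hj, ← mul_Tf_sub_Tf_succ n x (by omega) hx]
  ring

lemma yOf_add_mul_sum_Icc_yOf_div {i j : ℕ} (hi : 1 ≤ i) (hij : i < j) (hj : j ≤ n - 1)
    (hxn : x n ≠ 0) (hx : x (n + i) ≠ 0) (hT : ∀ k, 1 ≤ k → k ≤ n - 1 → Tf n x k ≠ 0) :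
    yOf n x (i + 1) + yOf n x (n + i) * ∑ m ∈ Icc (i + 2) j, yOf n x m / yOf n x (n + m - 1)
      = x (n + i) * (Tf n x i - Tf n x j) / Tf n x j := by
  have hTi' := hT (i + 1) (by omega) (by omega)
  have hTj := hT j (by omega) hj
  rw [sum_Icc_yOf_div n x (a := i + 1) (by omega) hij hj hT,
    yOf_of_two_le n x (by omega) (by omega),
    yOf_add n x (by omega) hi, ← mul_Tf_sub_Tf_succ n x (by omega) hx]
  field_simp
  ring

lemma yOf_one_add_mul_sum_Icc_yOf_div {i : ℕ} (hn : 2 ≤ n) (hi : 1 ≤ i) (hin : i ≤ n - 1)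
    (hxn : x n ≠ 0) (hT : ∀ k, 1 ≤ k → k ≤ n - 1 → Tf n x k ≠ 0) :
    yOf n x 1 + yOf n x n * ∑ m ∈ Icc 2 i, yOf n x m / yOf n x (n + m - 1) = (Tf n x i)⁻¹ := by
  rw [sum_Icc_yOf_div n x (a := 1) le_rfl hi hin hT, yOf_one, yOf_self n x hn]
  field_simp
  ring

end

/-- for all `1 ≤ i < j ≤ n+1`, `Y_{ij}(y(x)) = (1/x_n)·X_{ij}(x)`. -/
theorem stmt0 (n : ℕ) (hn : 2 ≤ n) (x : ℕ → ℂ)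
    (hx : ∀ k, 2 ≤ k → k ≤ 2 * n - 1 → x k ≠ 0)
    (hT : ∀ k, 1 ≤ k → k ≤ n - 1 → Tf n x k ≠ 0) :
    ∀ i j, 1 ≤ i → i < j → j ≤ n + 1 →
      Yc n (yOf n x) i j = (1 / x n) * Xc n x i j := by
  intro i j hi hij hj
  have hxn : x n ≠ 0 := hx n hn (by omega)
  have hxi : i ≤ n - 1 → x (n + i) ≠ 0 := fun h => hx _ (by omega) (by omega)
  have hTpred := Tf_pred n x (by omega)
  unfold Yc Xc
  split_ifs with _ _ _ _ hi_pred <;> try omega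
  · rw [yOf_self n x hn, mul_one, one_div]
  · subst i
    rw [yOf_one_add_mul_sum_Icc_yOf_div n x hn hi le_rfl hxn hT, hTpred]
    field_simp
  · rw [yOf_one_add_mul_sum_Icc_yOf_div n x hn hi (by omega) hxn hT, yOf_add n x (by omega) hi]
    field_simp [hT i hi (by omega)]
  · rw [hi_pred, Icc_eq_empty (by omega), sum_empty, Nat.sub_add_cancel (by omega)]
    field_simp
    ring
  · subst j
    rw [add_mul_sum_Icc_div n x hij le_rfl (hxi (by omega)), Tf_self, yOf_add n x (by omega) hi]
    ring
  · subst j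
    rw [yOf_add_mul_sum_Icc_yOf_div n x hi hij le_rfl hxn (hxi (by omega)) hT,
      add_mul_sum_Icc_div n x hij (by omega) (hxi (by omega)), hTpred]
    field_simp
  · rw [yOf_add_mul_sum_Icc_yOf_div n x hi hij (by omega) hxn (hxi (by omega)) hT,
      add_mul_sum_Icc_div n x hij (by omega) (hxi (by omega)), yOf_add n x (by omega) (by omega)]
    have hTj := hT j (by omega) (by omega)
    field_simp
end
end

section
/- Let n ≥ 2, c ∈ ℂ^×, and let x = (x_2,…,x_{2n−1}) be nonzero complex numbers such that all denominators occurring below are nonzero. Then for all i, j ∈ {1,…,n} one has γ_j(e_i^c(x)) = c^{a_{ij}}·γ_j(x), where (a_{ij}) is the Cartan matrix of type A_n (a_{ii} = 2, a_{ij} = −1 if |i−j| = 1, a_{ij} = 0 otherwise). -/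
/-!
Each `γ_j` is a Laurent monomial in the coordinates, hence multiplicative in `x`, and `e_i^c`
multiplies `x` coordinatewise by a point `t` with `t_1 = t_{2n} = 1` whose pair products
`t_k t_{n+k}` are `c` for `k = i` and `1` otherwise (for `2 ≤ i ≤ n - 1` because
`c_i · (c / c_i) = c`). Written in the pair products `p_k = x_k x_{n+k}`, with `p_0 = p_{n+1} = 1`,
`γ_j = p_j² / (p_{j-1} p_{j+1})`, so `γ_j(t) = c ^ (2 δ_{ij} - δ_{i,j-1} - δ_{i,j+1}) = c ^ a_{ij}`.
-/

noncomputable section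

/-- The rational maps `e_i^c` for `1 ≤ i ≤ n`:
`e_1^c` multiplies `x_{n+1}` by `c`; `e_n^c` multiplies `x_n` by `c`;
for `2 ≤ i ≤ n-1`, `e_i^c` multiplies `x_i` by `c_i` and `x_{n+i}` by `c/c_i`, where
`c_i = c(x_i x_{n+i} + x_{i+1} x_{n+i-1})/(c x_i x_{n+i} + x_{i+1} x_{n+i-1})`. -/
def eOp (n i : ℕ) (c : ℂ) (x : ℕ → ℂ) : ℕ → ℂ :=
  if i = 1 then fun k => if k = n + 1 then c * x k else x k
  else if i = n then fun k => if k = n then c * x k else x k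
  else fun k =>
    if k = i then
      (c * (x i * x (n + i) + x (i + 1) * x (n + i - 1)) /
        (c * x i * x (n + i) + x (i + 1) * x (n + i - 1))) * x k
    else if k = n + i then
      (c / (c * (x i * x (n + i) + x (i + 1) * x (n + i - 1)) /
        (c * x i * x (n + i) + x (i + 1) * x (n + i - 1)))) * x k
    else x k

/-- The functions `γ_i` for `1 ≤ i ≤ n` (conventions `x_1 = x_{2n} = 1`). -/
def gam (n : ℕ) (x : ℕ → ℂ) (i : ℕ) : ℂ :=
  if i = 1 then x (n + 1) ^ 2 / (x 2 * x (n + 2))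
  else if i = n then x n ^ 2 / (x (n - 1) * x (2 * n - 1))
  else x i ^ 2 * x (n + i) ^ 2 / (x (i - 1) * x (i + 1) * x (n + i - 1) * x (n + i + 1))

/-- The Cartan matrix of type `A_n`. -/
def cartA (i j : ℕ) : ℤ :=
  if i = j then 2 else if i + 1 = j ∨ j + 1 = i then -1 else 0

theorem gam_mul (n : ℕ) (x y : ℕ → ℂ) (j : ℕ) : gam n (x * y) j = gam n x j * gam n y j := by
  unfold gam
  split_ifs <;> simp only [Pi.mul_apply] <;> ring

def pairProd (n : ℕ) (x : ℕ → ℂ) (k : ℕ) : ℂ :=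
  if k = 0 ∨ n < k then 1 else x k * x (n + k)

theorem pairProd_eq_one {n k : ℕ} (x : ℕ → ℂ) (hk : k = 0 ∨ n < k) : pairProd n x k = 1 :=
  if_pos hk

theorem pairProd_eq_mul {n k : ℕ} (x : ℕ → ℂ) (hk1 : 1 ≤ k) (hkn : k ≤ n) :
    pairProd n x k = x k * x (n + k) :=
  if_neg (by omega)

theorem gam_eq_pairProd {n : ℕ} (hn : 2 ≤ n) {x : ℕ → ℂ} (hx1 : x 1 = 1) (hx2n : x (2 * n) = 1)
    {j : ℕ} (hj1 : 1 ≤ j) (hjn : j ≤ n) :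
    gam n x j = pairProd n x j ^ 2 / (pairProd n x (j - 1) * pairProd n x (j + 1)) := by
  rw [pairProd_eq_mul x hj1 hjn]
  obtain rfl | hj1' := eq_or_ne j 1
  · rw [gam, if_pos rfl, pairProd_eq_one x (by omega), pairProd_eq_mul x le_add_self hn, hx1]
    ring
  obtain rfl | hjn' := eq_or_ne j n
  · rw [gam, if_neg hj1', if_pos rfl, pairProd_eq_mul x (by omega) (by omega),
      pairProd_eq_one x (by omega), ← two_mul, hx2n, show j + (j - 1) = 2 * j - 1 by omega]
    ring
  · rw [gam, if_neg hj1', if_neg hjn', pairProd_eq_mul x (by omega) (by omega),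
      pairProd_eq_mul x (by omega) (by omega), show n + (j - 1) = n + j - 1 by omega, ← add_assoc]
    ring

theorem mulSingle_sq_div_eq_zpow_cartA {K : Type*} [Field K] {i j : ℕ} (hj : j ≠ 0) (c : K) :
    (Pi.mulSingle i c : ℕ → K) j ^ 2 /
        ((Pi.mulSingle i c : ℕ → K) (j - 1) * (Pi.mulSingle i c : ℕ → K) (j + 1)) =
      c ^ cartA i j := by
  unfold cartA
  simp only [Pi.mulSingle_apply]
  split_ifs <;> first | omega | simp

/-- The factor `c_i` in the definition of `e_i^c`. -/
def eMultiplier (n i : ℕ) (c : ℂ) (x : ℕ → ℂ) : ℂ :=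
  c * (x i * x (n + i) + x (i + 1) * x (n + i - 1)) /
    (c * x i * x (n + i) + x (i + 1) * x (n + i - 1))

def eOpFactor (n i : ℕ) (c : ℂ) (x : ℕ → ℂ) : ℕ → ℂ :=
  if i = 1 then Pi.mulSingle (n + 1) c
  else if i = n then Pi.mulSingle n c
  else fun k =>
    if k = i then eMultiplier n i c x else if k = n + i then c / eMultiplier n i c x else 1

theorem eOp_eq_eOpFactor_mul (n i : ℕ) (c : ℂ) (x : ℕ → ℂ) :
    eOp n i c x = eOpFactor n i c x * x := by
  funext k
  unfold eOp eOpFactor eMultiplier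
  split_ifs <;> simp_all [Pi.mulSingle_apply]

theorem eOpFactor_one {n : ℕ} (hn : 2 ≤ n) (i : ℕ) (c : ℂ) (x : ℕ → ℂ) :
    eOpFactor n i c x 1 = 1 := by
  unfold eOpFactor
  split_ifs <;> simp only [Pi.mulSingle_apply] <;> split_ifs <;> first | rfl | omega

theorem eOpFactor_two_mul {n i : ℕ} (hn : 2 ≤ n) (hin : i ≤ n) (c : ℂ) (x : ℕ → ℂ) :
    eOpFactor n i c x (2 * n) = 1 := by
  unfold eOpFactor
  split_ifs <;> simp only [Pi.mulSingle_apply] <;> split_ifs <;> first | rfl | omega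

theorem eOpFactor_of_ne {n i k : ℕ} (c : ℂ) (x : ℕ → ℂ) (hki : k ≠ i) (hkni : k ≠ n + i) :
    eOpFactor n i c x k = 1 := by
  unfold eOpFactor
  split_ifs <;> simp only [Pi.mulSingle_apply] <;> split_ifs <;> first | rfl | omega

theorem eOpFactor_mul_eOpFactor {n i : ℕ} (c : ℂ) (x : ℕ → ℂ)
    (hnum : 2 ≤ i → i ≤ n - 1 → x i * x (n + i) + x (i + 1) * x (n + i - 1) ≠ 0)
    (hden : 2 ≤ i → i ≤ n - 1 → c * x i * x (n + i) + x (i + 1) * x (n + i - 1) ≠ 0)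
    (hi1 : 1 ≤ i) (hin : i ≤ n) :
    eOpFactor n i c x i * eOpFactor n i c x (n + i) = c := by
  unfold eOpFactor
  split_ifs with hi_one hi_n
  · subst hi_one
    rw [Pi.mulSingle_eq_of_ne (by omega), Pi.mulSingle_eq_same, one_mul]
  · subst hi_n
    rw [Pi.mulSingle_eq_same, Pi.mulSingle_eq_of_ne (by omega), mul_one]
  · dsimp only
    rw [if_pos rfl, if_neg (by omega), if_pos rfl]
    refine mul_div_cancel_of_imp' fun he => ?_
    simpa [eMultiplier, hnum (by omega) (by omega), hden (by omega) (by omega)] using he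

theorem pairProd_eOpFactor {n i : ℕ} (c : ℂ) (x : ℕ → ℂ)
    (hnum : 2 ≤ i → i ≤ n - 1 → x i * x (n + i) + x (i + 1) * x (n + i - 1) ≠ 0)
    (hden : 2 ≤ i → i ≤ n - 1 → c * x i * x (n + i) + x (i + 1) * x (n + i - 1) ≠ 0)
    (hi1 : 1 ≤ i) (hin : i ≤ n) :
    pairProd n (eOpFactor n i c x) = Pi.mulSingle i c := by
  funext k
  obtain rfl | hki := eq_or_ne k i
  · rw [pairProd_eq_mul _ hi1 hin, eOpFactor_mul_eOpFactor c x hnum hden hi1 hin,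
      Pi.mulSingle_eq_same]
  rw [Pi.mulSingle_eq_of_ne hki]
  by_cases hk : k = 0 ∨ n < k
  · exact pairProd_eq_one _ hk
  · rw [pairProd_eq_mul _ (by omega) (by omega), eOpFactor_of_ne c x hki (by omega),
      eOpFactor_of_ne c x (by omega) (by omega), one_mul]

theorem stmt5_general (n : ℕ) (hn : 2 ≤ n) (c : ℂ) (x : ℕ → ℂ)
    (hden : ∀ i, 2 ≤ i → i ≤ n - 1 →
      c * x i * x (n + i) + x (i + 1) * x (n + i - 1) ≠ 0)
    (hnum : ∀ i, 2 ≤ i → i ≤ n - 1 →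
      x i * x (n + i) + x (i + 1) * x (n + i - 1) ≠ 0) :
    ∀ i j, 1 ≤ i → i ≤ n → 1 ≤ j → j ≤ n →
      gam n (eOp n i c x) j = c ^ (cartA i j) * gam n x j := by
  intro i j hi1 hin hj1 hjn
  rw [eOp_eq_eOpFactor_mul, gam_mul,
    gam_eq_pairProd hn (eOpFactor_one hn i c x) (eOpFactor_two_mul hn hin c x) hj1 hjn,
    pairProd_eOpFactor c x (hnum i) (hden i) hi1 hin,
    mulSingle_sq_div_eq_zpow_cartA (by omega)]

/-- `γ_j(e_i^c(x)) = c^{a_{ij}}·γ_j(x)` for all `1 ≤ i, j ≤ n`. -/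
theorem stmt5 (n : ℕ) (hn : 2 ≤ n) (c : ℂ) (hc : c ≠ 0) (x : ℕ → ℂ)
    (hx : ∀ k, 1 ≤ k → k ≤ 2 * n → x k ≠ 0)
    (hx1 : x 1 = 1) (hx2n : x (2 * n) = 1)
    (hden : ∀ i, 2 ≤ i → i ≤ n - 1 →
      c * x i * x (n + i) + x (i + 1) * x (n + i - 1) ≠ 0)
    (hnum : ∀ i, 2 ≤ i → i ≤ n - 1 →
      x i * x (n + i) + x (i + 1) * x (n + i - 1) ≠ 0) :
    ∀ i j, 1 ≤ i → i ≤ n → 1 ≤ j → j ≤ n →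
      gam n (eOp n i c x) j = c ^ (cartA i j) * gam n x j :=
  stmt5_general n hn c x hden hnum
end
end

section
/- Let n ≥ 2, c ∈ ℂ^×, and let x = (x_2,…,x_{2n−1}) be nonzero complex numbers such that all denominators occurring below are nonzero. Then γ_0(e_0^c(x)) = c²·γ_0(x); γ_0(e_1^c(x)) = c^{−1}·γ_0(x); γ_0(e_n^c(x)) = c^{−1}·γ_0(x); and γ_0(e_i^c(x)) = γ_0(x) for 2 ≤ i ≤ n−1, where γ_0(x) = 1/(x_n x_{n+1}). -/
/-!
`γ_0` only sees the coordinates `x_n` and `x_{n+1}`, so it suffices to track how each map rescales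
these two coordinates: `e_0^c` divides both by `c`, `e_1^c` and `e_n^c` multiply one of them by `c`,
and `e_i^c` for `2 ≤ i ≤ n-1` touches neither.
-/

noncomputable section

/-- `Sf n x k = ∑_{j=2}^{k} x_j / x_{n+j-1}` (so `Sf n x 1 = 0`, `S(x) = Sf n x n`). -/
def Sf (n : ℕ) (x : ℕ → ℂ) (k : ℕ) : ℂ :=
  ∑ j ∈ Finset.Icc 2 k, x j / x (n + j - 1)

/-- The rational map `e_0^c`. -/
def e0M (n : ℕ) (c : ℂ) (x : ℕ → ℂ) (k : ℕ) : ℂ :=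
  if k ≤ n - 1 then x k * Sf n x n / (c * Sf n x k + Tf n x k)
  else if k ≤ n + 1 then x k / c
  else x k * (c * Sf n x (k - n) + Tf n x (k - n)) / (c * Sf n x n)

/-- `γ_0(x) = 1/(x_n x_{n+1})`. -/
def gam0 (n : ℕ) (x : ℕ → ℂ) : ℂ := 1 / (x n * x (n + 1))

theorem gam0_of_scale {n : ℕ} {x y : ℕ → ℂ} (a b : ℂ) (ha : y n = a * x n)
    (hb : y (n + 1) = b * x (n + 1)) : gam0 n y = (a * b)⁻¹ * gam0 n x := by
  simp only [gam0, ha, hb, one_div]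
  ring

section Coordinates

variable {n : ℕ} (c : ℂ) (x : ℕ → ℂ)

theorem e0M_apply_self (hn : 1 ≤ n) : e0M n c x n = c⁻¹ * x n := by
  rw [e0M, if_neg (by omega), if_pos (by omega), div_eq_inv_mul]

theorem e0M_apply_succ (hn : 1 ≤ n) : e0M n c x (n + 1) = c⁻¹ * x (n + 1) := by
  rw [e0M, if_neg (by omega), if_pos le_rfl, div_eq_inv_mul]

theorem eOp_one_apply_self : eOp n 1 c x n = 1 * x n := by
  simp [eOp]

theorem eOp_one_apply_succ : eOp n 1 c x (n + 1) = c * x (n + 1) := by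
  simp [eOp]

theorem eOp_self_apply_self (hn : n ≠ 1) : eOp n n c x n = c * x n := by
  simp [eOp, hn]

theorem eOp_self_apply_succ (hn : n ≠ 1) : eOp n n c x (n + 1) = 1 * x (n + 1) := by
  simp [eOp, hn]

variable {i : ℕ} (hi : 2 ≤ i) (hin : i ≤ n - 1)
include hi hin

theorem eOp_apply_self_of_mem : eOp n i c x n = 1 * x n := by
  rw [eOp, if_neg (by omega), if_neg (by omega), if_neg (by omega), if_neg (by omega), one_mul]

theorem eOp_apply_succ_of_mem : eOp n i c x (n + 1) = 1 * x (n + 1) := by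
  rw [eOp, if_neg (by omega), if_neg (by omega), if_neg (by omega), if_neg (by omega), one_mul]

end Coordinates

theorem stmt6_general (n : ℕ) (hn : 2 ≤ n) (c : ℂ) (x : ℕ → ℂ) :
    gam0 n (e0M n c x) = c ^ 2 * gam0 n x ∧
    gam0 n (eOp n 1 c x) = c⁻¹ * gam0 n x ∧
    gam0 n (eOp n n c x) = c⁻¹ * gam0 n x ∧
    ∀ i, 2 ≤ i → i ≤ n - 1 → gam0 n (eOp n i c x) = gam0 n x := by
  refine ⟨?_, ?_, ?_, fun i hi hin => ?_⟩
  · rw [gam0_of_scale _ _ (e0M_apply_self c x (by omega)) (e0M_apply_succ c x (by omega)),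
      mul_inv, inv_inv, sq]
  · rw [gam0_of_scale _ _ (eOp_one_apply_self c x) (eOp_one_apply_succ c x), one_mul]
  · rw [gam0_of_scale _ _ (eOp_self_apply_self c x (by omega))
      (eOp_self_apply_succ c x (by omega)), mul_one]
  · rw [gam0_of_scale _ _ (eOp_apply_self_of_mem c x hi hin) (eOp_apply_succ_of_mem c x hi hin),
      mul_one, inv_one, one_mul]

/-- `γ_0(e_0^c(x)) = c²·γ_0(x)`, `γ_0(e_1^c(x)) = c⁻¹·γ_0(x)`,
`γ_0(e_n^c(x)) = c⁻¹·γ_0(x)`, and `γ_0(e_i^c(x)) = γ_0(x)` for `2 ≤ i ≤ n-1`. -/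
theorem stmt6 (n : ℕ) (hn : 2 ≤ n) (c : ℂ) (hc : c ≠ 0) (x : ℕ → ℂ)
    (hx : ∀ k, 2 ≤ k → k ≤ 2 * n - 1 → x k ≠ 0)
    (hS : Sf n x n ≠ 0)
    (hden0 : ∀ k, 2 ≤ k → k ≤ n - 1 → c * Sf n x k + Tf n x k ≠ 0)
    (hdenI : ∀ i, 2 ≤ i → i ≤ n - 1 →
      c * x i * x (n + i) + x (i + 1) * x (n + i - 1) ≠ 0)
    (hnumI : ∀ i, 2 ≤ i → i ≤ n - 1 →
      x i * x (n + i) + x (i + 1) * x (n + i - 1) ≠ 0) :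
    gam0 n (e0M n c x) = c ^ 2 * gam0 n x ∧
    gam0 n (eOp n 1 c x) = c⁻¹ * gam0 n x ∧
    gam0 n (eOp n n c x) = c⁻¹ * gam0 n x ∧
    ∀ i, 2 ≤ i → i ≤ n - 1 → gam0 n (eOp n i c x) = gam0 n x :=
  stmt6_general n hn c x
end
end

section
/- Let n ≥ 3, c, d ∈ ℂ^×, and 2 ≤ i ≤ n−1. Then for every x = (x_2,…,x_{2n−1}) ∈ (ℂ^×)^{2n−2} for which all denominators occurring are nonzero, e_0^c(e_i^d(x)) = e_i^d(e_0^c(x)); that is, the rational maps e_0^c and e_i^d commute. -/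
/-!
Write `p = x_i / x_{n+i-1}` and `q = x_{i+1} / x_{n+i}`. Among the ratios `x_j / x_{n+j-1}`, the
map `e_i^d` changes only `p` and `q`, and keeps `p + q` fixed; so it fixes every partial sum `S_k`
with `k ≠ i`. Since `c S_k + T_k = (c - 1) S_k + S`, the map `e_0^c` rescales each coordinate by a
factor depending only on `S` and one `S_k`, hence the two maps commute at every coordinate other
than `i` and `n + i`. At those two coordinates both sides agree as soon as
`c_i(e_0^c x) · Ã = c_i(x) · A`, where `A = (c - 1) S_i + S` and `Ã` is the same quantity after
applying `e_i^d`. In terms of `p` and `q` we have `c_i(x) = d (p + q) / (d p + q)`,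
`Ã = A + (c - 1)(d - 1) p q / (d p + q)` and
`c_i(e_0^c x) = d A (p + q) / (A (d p + q) + (c - 1)(d - 1) p q)`, which gives the identity.
-/

noncomputable section

/-- The rational map `e_i^c` for `2 ≤ i ≤ n-1`. -/
def eIM (n i : ℕ) (c : ℂ) (x : ℕ → ℂ) (k : ℕ) : ℂ :=
  if k = i then
    (c * (x i * x (n + i) + x (i + 1) * x (n + i - 1)) /
      (c * x i * x (n + i) + x (i + 1) * x (n + i - 1))) * x k
  else if k = n + i then
    (c / (c * (x i * x (n + i) + x (i + 1) * x (n + i - 1)) /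
      (c * x i * x (n + i) + x (i + 1) * x (n + i - 1)))) * x k
  else x k

/-- All coordinates in range are nonzero. -/
def Nz (n : ℕ) (z : ℕ → ℂ) : Prop := ∀ k, 2 ≤ k → k ≤ 2 * n - 1 → z k ≠ 0

/-- Denominators appearing in `e_0^c` at the point `z` are nonzero. -/
def Dom0 (n : ℕ) (c : ℂ) (z : ℕ → ℂ) : Prop :=
  Sf n z n ≠ 0 ∧ ∀ k, 2 ≤ k → k ≤ n - 1 → c * Sf n z k + Tf n z k ≠ 0

/-- Denominator (and the numerator `c_i`) appearing in `e_i^c` at `z` are nonzero. -/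
def DomI (n i : ℕ) (c : ℂ) (z : ℕ → ℂ) : Prop :=
  c * z i * z (n + i) + z (i + 1) * z (n + i - 1) ≠ 0 ∧
  z i * z (n + i) + z (i + 1) * z (n + i - 1) ≠ 0

open Finset

theorem Finset.sum_congr_of_subset {ι M : Type*} [DecidableEq ι] [AddCommMonoid M]
    {s t : Finset ι} {f g : ι → M} (hts : t ⊆ s) (hfg : ∀ j ∈ s \ t, f j = g j)
    (ht : ∑ j ∈ t, f j = ∑ j ∈ t, g j) : ∑ j ∈ s, f j = ∑ j ∈ s, g j := by
  rw [← sum_sdiff hts, ← sum_sdiff (f := g) hts, sum_congr rfl hfg, ht]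

section PartialSums

variable {n k : ℕ} {x : ℕ → ℂ}

theorem Sf_one : Sf n x 1 = 0 := by simp [Sf]

theorem Sf_eq_Sf_pred_add (hk : 2 ≤ k) :
    Sf n x k = Sf n x (k - 1) + x k / x (n + k - 1) := by
  obtain ⟨k, rfl⟩ : ∃ m, k = m + 1 := ⟨k - 1, by omega⟩
  rw [Sf, Sf, Nat.add_sub_cancel, sum_Icc_succ_top hk]

theorem Sf_add_Tf (hk : 1 ≤ k) (hkn : k ≤ n) : Sf n x k + Tf n x k = Sf n x n := by
  simp only [Sf, Tf, ← Ico_add_one_right_eq_Icc]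
  exact sum_Ico_consecutive _ (by omega) (by omega)

theorem mul_Sf_add_Tf (c : ℂ) (hk : 1 ≤ k) (hkn : k ≤ n) :
    c * Sf n x k + Tf n x k = (c - 1) * Sf n x k + Sf n x n := by
  linear_combination Sf_add_Tf (x := x) hk hkn

theorem Sf_eq_of_ratio_eq {y : ℕ → ℂ} {i : ℕ} (hi : 2 ≤ i)
    (hratio : ∀ j, 2 ≤ j → j ≤ n → j ≠ i → j ≠ i + 1 →
      y j / y (n + j - 1) = x j / x (n + j - 1))
    (hpair : y i / y (n + i - 1) + y (i + 1) / y (n + i) =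
      x i / x (n + i - 1) + x (i + 1) / x (n + i))
    (hkn : k ≤ n) (hki : k ≠ i) : Sf n y k = Sf n x k := by
  rcases lt_or_gt_of_ne hki with hk | hk
  · refine sum_congr rfl fun j hj => ?_
    rw [mem_Icc] at hj
    exact hratio j (by omega) (by omega) (by omega) (by omega)
  · refine sum_congr_of_subset (t := {i, i + 1}) ?_ (fun j hj => ?_) ?_
    · intro j
      simp only [mem_insert, mem_singleton, mem_Icc]
      omega
    · simp only [mem_sdiff, mem_insert, mem_singleton, mem_Icc] at hj
      exact hratio j (by omega) (by omega) (by omega) (by omega)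
    · rw [sum_pair (by omega), sum_pair (by omega), show n + (i + 1) - 1 = n + i by omega,
        hpair]

end PartialSums

section Formulas

variable {n i k : ℕ} {c d : ℂ} {x : ℕ → ℂ}

theorem e0M_of_le (hS : Sf n x n ≠ 0) (hk : 1 ≤ k) (hkn : k ≤ n) :
    e0M n c x k = x k * Sf n x n / ((c - 1) * Sf n x k + Sf n x n) := by
  unfold e0M
  split_ifs
  · rw [mul_Sf_add_Tf c hk hkn]
  · obtain rfl : k = n := by omega
    rw [sub_mul, one_mul, sub_add_cancel, mul_div_mul_right _ _ hS]
  · omega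

theorem e0M_add (hS : Sf n x n ≠ 0) (hk : 1 ≤ k) (hkn : k < n) :
    e0M n c x (n + k) = x (n + k) * ((c - 1) * Sf n x k + Sf n x n) / (c * Sf n x n) := by
  unfold e0M
  rw [if_neg (by omega)]
  split_ifs
  · obtain rfl : k = 1 := by omega
    rw [Sf_one, mul_zero, zero_add, mul_div_mul_right _ _ hS]
  · rw [Nat.add_sub_cancel_left, mul_Sf_add_Tf c hk hkn.le]

theorem Dom0.denom_ne_zero (h : Dom0 n c x) (hc : c ≠ 0) (hk : 1 ≤ k) (hkn : k ≤ n) :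
    (c - 1) * Sf n x k + Sf n x n ≠ 0 := by
  rcases (show k = 1 ∨ k = n ∨ 2 ≤ k ∧ k ≤ n - 1 by omega) with rfl | rfl | ⟨hk₂, hkn'⟩
  · simpa [Sf_one] using h.1
  · rw [sub_mul, one_mul, sub_add_cancel]
    exact mul_ne_zero hc h.1
  · rw [← mul_Sf_add_Tf c hk hkn]
    exact h.2 k hk₂ hkn'

/-- `eCoeff d (x i) (x (n + i)) (x (i + 1)) (x (n + i - 1))` is the factor `c_i` of `e_i^d`. -/
def eCoeff (d a b r s : ℂ) : ℂ := d * (a * b + r * s) / (d * a * b + r * s)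

theorem eCoeff_ne_zero {a b r s : ℂ} (hd : d ≠ 0) (hP : a * b + r * s ≠ 0)
    (hQ : d * a * b + r * s ≠ 0) : eCoeff d a b r s ≠ 0 :=
  div_ne_zero (mul_ne_zero hd hP) hQ

theorem eCoeff_mul_div_add_div {a b r s : ℂ} (hd : d ≠ 0) (hb : b ≠ 0) (hs : s ≠ 0)
    (hQ : d * a * b + r * s ≠ 0) :
    eCoeff d a b r s * a / s + r / (d / eCoeff d a b r s * b) = a / s + r / b := by
  unfold eCoeff
  field_simp

theorem eIM_apply_self :
    eIM n i d x i = eCoeff d (x i) (x (n + i)) (x (i + 1)) (x (n + i - 1)) * x i := by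
  simp [eIM, eCoeff]

theorem eIM_apply_add_self (hn : n ≠ 0) :
    eIM n i d x (n + i) =
      d / eCoeff d (x i) (x (n + i)) (x (i + 1)) (x (n + i - 1)) * x (n + i) := by
  simp [eIM, eCoeff, hn]

theorem eIM_apply_of_ne (hki : k ≠ i) (hkni : k ≠ n + i) : eIM n i d x k = x k := by
  simp [eIM, hki, hkni]

end Formulas

theorem eCoeff_scaled_mul {a b r s A S c d : ℂ} (hb : b ≠ 0) (hs : s ≠ 0) (hc : c ≠ 0)
    (hS : S ≠ 0) (hA : A ≠ 0) (hC : A + (c - 1) * (r / b) ≠ 0) (hQ : d * a * b + r * s ≠ 0)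
    (hQ' : d * (a * S / A) * (b * A / (c * S)) +
      r * S / (A + (c - 1) * (r / b)) * (s * (A - (c - 1) * (a / s)) / (c * S)) ≠ 0) :
    eCoeff d (a * S / A) (b * A / (c * S)) (r * S / (A + (c - 1) * (r / b)))
        (s * (A - (c - 1) * (a / s)) / (c * S)) *
      (A + (c - 1) * (eCoeff d a b r s - 1) * (a / s)) = eCoeff d a b r s * A := by
  obtain ⟨p, rfl⟩ : ∃ p, a = p * s := ⟨a / s, by field_simp⟩
  obtain ⟨q, rfl⟩ : ∃ q, r = q * b := ⟨r / b, by field_simp⟩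
  simp only [mul_div_cancel_right₀ _ hs, mul_div_cancel_right₀ _ hb] at *
  -- keep `C` atomic, so that `field_simp` sees it as a nonzero denominator
  generalize hCdef : A + (c - 1) * q = C at hC hQ' ⊢
  have hD : d * p + q ≠ 0 := by
    intro h; apply hQ; linear_combination b * s * h
  have hD' : d * p * C + q * (A - (c - 1) * p) ≠ 0 := by
    intro h; apply hQ'; field_simp; linear_combination b * s * h
  have hcoeff : eCoeff d (p * s) b (q * b) s = d * (p + q) / (d * p + q) := by
    unfold eCoeff; rw [div_eq_div_iff (by simpa using hQ) hD]; ring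
  have hcoeff' : eCoeff d (p * s * S / A) (b * A / (c * S)) (q * b * S / C)
      (s * (A - (c - 1) * p) / (c * S)) =
      d * (p * C + q * (A - (c - 1) * p)) / (d * p * C + q * (A - (c - 1) * p)) := by
    unfold eCoeff
    rw [div_eq_div_iff (by simpa using hQ') hD']
    field_simp
  have hnum : p * C + q * (A - (c - 1) * p) = A * (p + q) := by subst hCdef; ring
  rw [hcoeff, hcoeff', hnum, div_mul_eq_mul_div, div_eq_iff hD']
  field_simp
  subst hCdef
  ring

section Commutation

variable {n i k : ℕ} {c d : ℂ} {x : ℕ → ℂ}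

theorem Sf_eIM_of_ne (hi : 2 ≤ i) (hin : i < n) (hd : d ≠ 0) (hx : Nz n x)
    (h1 : DomI n i d x) (hkn : k ≤ n) (hki : k ≠ i) : Sf n (eIM n i d x) k = Sf n x k := by
  refine Sf_eq_of_ratio_eq hi (fun j hj hjn hji hji' => ?_) ?_ hkn hki
  · rw [eIM_apply_of_ne hji (by omega), eIM_apply_of_ne (by omega) (by omega)]
  · rw [eIM_apply_self, eIM_apply_add_self (by omega), eIM_apply_of_ne (by omega) (by omega),
      eIM_apply_of_ne (by omega) (by omega)]
    exact eCoeff_mul_div_add_div hd (hx _ (by omega) (by omega)) (hx _ (by omega) (by omega))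
      h1.1

theorem Sf_eIM_self (hi : 2 ≤ i) (hin : i < n) (hd : d ≠ 0) (hx : Nz n x)
    (h1 : DomI n i d x) :
    Sf n (eIM n i d x) i = Sf n x (i - 1) +
      eCoeff d (x i) (x (n + i)) (x (i + 1)) (x (n + i - 1)) * x i / x (n + i - 1) := by
  rw [Sf_eq_Sf_pred_add hi, Sf_eIM_of_ne hi hin hd hx h1 (by omega) (by omega), eIM_apply_self,
    eIM_apply_of_ne (by omega) (by omega), mul_div_assoc]

theorem e0M_eIM_of_ne (hi : 2 ≤ i) (hin : i < n) (hd : d ≠ 0) (hx : Nz n x)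
    (h1 : DomI n i d x) (hS : Sf n x n ≠ 0) (hk : 2 ≤ k) (hkn : k ≤ 2 * n - 1) (hki : k ≠ i)
    (hkni : k ≠ n + i) : e0M n c (eIM n i d x) k = eIM n i d (e0M n c x) k := by
  have hS' := Sf_eIM_of_ne hi hin hd hx h1 le_rfl hin.ne'
  rw [eIM_apply_of_ne hki hkni]
  rcases le_or_gt k n with hk' | hk'
  · rw [e0M_of_le (hS' ▸ hS) (by omega) hk', e0M_of_le hS (by omega) hk', hS',
      Sf_eIM_of_ne hi hin hd hx h1 hk' hki, eIM_apply_of_ne hki hkni]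
  · obtain ⟨l, rfl⟩ : ∃ l, k = n + l := ⟨k - n, by omega⟩
    rw [e0M_add (hS' ▸ hS) (by omega) (by omega), e0M_add hS (by omega) (by omega), hS',
      Sf_eIM_of_ne hi hin hd hx h1 (by omega) (by omega), eIM_apply_of_ne hki hkni]

theorem eCoeff_e0M_mul (hi : 2 ≤ i) (hin : i < n) (hc : c ≠ 0) (hd : d ≠ 0) (hx : Nz n x)
    (h1 : DomI n i d x) (h4 : Dom0 n c x) (h6 : DomI n i d (e0M n c x)) :
    eCoeff d (e0M n c x i) (e0M n c x (n + i)) (e0M n c x (i + 1)) (e0M n c x (n + i - 1)) *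
        ((c - 1) * Sf n (eIM n i d x) i + Sf n x n) =
      eCoeff d (x i) (x (n + i)) (x (i + 1)) (x (n + i - 1)) *
        ((c - 1) * Sf n x i + Sf n x n) := by
  have hS := h4.1
  have hSi : Sf n x i = Sf n x (i - 1) + x i / x (n + i - 1) := Sf_eq_Sf_pred_add hi
  have hSi₁ : Sf n x (i + 1) = Sf n x i + x (i + 1) / x (n + i) := by
    rw [Sf_eq_Sf_pred_add (by omega), Nat.add_sub_cancel, show n + (i + 1) - 1 = n + i by omega]
  have hC : (c - 1) * Sf n x (i + 1) + Sf n x n =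
      (c - 1) * Sf n x i + Sf n x n + (c - 1) * (x (i + 1) / x (n + i)) := by
    rw [hSi₁]; ring
  have hB : (c - 1) * Sf n x (i - 1) + Sf n x n =
      (c - 1) * Sf n x i + Sf n x n - (c - 1) * (x i / x (n + i - 1)) := by
    rw [hSi]; ring
  have hA' : (c - 1) * Sf n (eIM n i d x) i + Sf n x n = (c - 1) * Sf n x i + Sf n x n +
      (c - 1) * (eCoeff d (x i) (x (n + i)) (x (i + 1)) (x (n + i - 1)) - 1) *
        (x i / x (n + i - 1)) := by
    rw [Sf_eIM_self hi hin hd hx h1, hSi]; ring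
  have hpred : e0M n c x (n + i - 1) = x (n + i - 1) *
      ((c - 1) * Sf n x i + Sf n x n - (c - 1) * (x i / x (n + i - 1))) / (c * Sf n x n) := by
    rw [← hB, show n + i - 1 = n + (i - 1) by omega, e0M_add hS (by omega) (by omega)]
  obtain ⟨hQ', -⟩ := h6
  rw [e0M_of_le hS (by omega) hin.le, e0M_add hS (by omega) hin,
    e0M_of_le hS (by omega) (by omega), hC, hpred] at hQ' ⊢
  rw [hA']
  exact eCoeff_scaled_mul (hx _ (by omega) (by omega)) (hx _ (by omega) (by omega)) hc hS
    (h4.denom_ne_zero hc (by omega) hin.le) (hC ▸ h4.denom_ne_zero hc (by omega) hin) h1.1 hQ'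

theorem e0M_eIM_apply_self (hi : 2 ≤ i) (hin : i < n) (hc : c ≠ 0) (hd : d ≠ 0) (hx : Nz n x)
    (h1 : DomI n i d x) (h3 : Dom0 n c (eIM n i d x)) (h4 : Dom0 n c x)
    (h6 : DomI n i d (e0M n c x)) : e0M n c (eIM n i d x) i = eIM n i d (e0M n c x) i := by
  have key := eCoeff_e0M_mul hi hin hc hd hx h1 h4 h6
  have hS' := Sf_eIM_of_ne hi hin hd hx h1 le_rfl hin.ne'
  have hA' := hS' ▸ h3.denom_ne_zero hc (by omega) hin.le
  rw [eIM_apply_self, e0M_of_le h3.1 (by omega) hin.le, eIM_apply_self, hS']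
  rw [e0M_of_le h4.1 (by omega) hin.le] at key ⊢
  rw [eq_comm, mul_div_assoc', div_eq_div_iff (h4.denom_ne_zero hc (by omega) hin.le) hA']
  linear_combination (x i * Sf n x n) * key

theorem e0M_eIM_apply_add_self (hi : 2 ≤ i) (hin : i < n) (hc : c ≠ 0) (hd : d ≠ 0)
    (hx : Nz n x) (h1 : DomI n i d x) (h3 : Dom0 n c (eIM n i d x)) (h4 : Dom0 n c x)
    (h6 : DomI n i d (e0M n c x)) :
    e0M n c (eIM n i d x) (n + i) = eIM n i d (e0M n c x) (n + i) := by
  have key := eCoeff_e0M_mul hi hin hc hd hx h1 h4 h6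
  have hci := eCoeff_ne_zero hd h1.2 h1.1
  have hci' := eCoeff_ne_zero hd h6.2 h6.1
  rw [e0M_add h3.1 (by omega) hin, eIM_apply_add_self (by omega),
    eIM_apply_add_self (by omega), Sf_eIM_of_ne hi hin hd hx h1 le_rfl hin.ne']
  rw [e0M_add h4.1 (by omega) hin] at key hci' ⊢
  field_simp
  rw [div_left_inj' h4.1]
  linear_combination x (n + i) * key

end Commutation

theorem stmt9_general (n : ℕ) (c d : ℂ) (hc : c ≠ 0) (hd : d ≠ 0)
    (i : ℕ) (hi : 2 ≤ i) (hi' : i ≤ n - 1) (x : ℕ → ℂ)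
    (hx : Nz n x)
    (h1 : DomI n i d x) (h3 : Dom0 n c (eIM n i d x))
    (h4 : Dom0 n c x) (h6 : DomI n i d (e0M n c x)) :
    ∀ k, 2 ≤ k → k ≤ 2 * n - 1 →
      e0M n c (eIM n i d x) k = eIM n i d (e0M n c x) k := by
  intro k hk hkn
  have hin : i < n := by omega
  by_cases hki : k = i
  · subst hki
    exact e0M_eIM_apply_self hi hin hc hd hx h1 h3 h4 h6
  by_cases hkni : k = n + i
  · subst hkni
    exact e0M_eIM_apply_add_self hi hin hc hd hx h1 h3 h4 h6
  exact e0M_eIM_of_ne hi hin hd hx h1 h4.1 hk hkn hki hkni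

/-- the rational maps `e_0^c` and `e_i^d` commute for `2 ≤ i ≤ n-1`. -/
theorem stmt9 (n : ℕ) (hn : 3 ≤ n) (c d : ℂ) (hc : c ≠ 0) (hd : d ≠ 0)
    (i : ℕ) (hi : 2 ≤ i) (hi' : i ≤ n - 1) (x : ℕ → ℂ)
    (hx : Nz n x)
    (h1 : DomI n i d x) (h2 : Nz n (eIM n i d x)) (h3 : Dom0 n c (eIM n i d x))
    (h4 : Dom0 n c x) (h5 : Nz n (e0M n c x)) (h6 : DomI n i d (e0M n c x)) :
    ∀ k, 2 ≤ k → k ≤ 2 * n - 1 →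
      e0M n c (eIM n i d x) k = eIM n i d (e0M n c x) k :=
  stmt9_general n c d hc hd i hi hi' x hx h1 h3 h4 h6
end
end

section
/- Let n ≥ 2, let x = (x_2,…,x_{2n−1}) ∈ ℤ^{2n−2}, and let b = Ω(x). Then z_i(b) = β_i(x) − β_{i+1}(x) for all 2 ≤ i ≤ n−1; consequently, for each 2 ≤ m ≤ n, condition (F_m) holds for b if and only if condition (φ_m) holds for x. Moreover, for every x ∈ ℤ^{2n−2} there is exactly one j ∈ {2,…,n} for which condition (φ_j) holds. -/
/-- The map `Ω`. -/
def Omega (n : ℕ) (x : ℕ → ℤ) : (ℕ → ℤ) × (ℕ → ℤ) :=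
  (fun i => if i = 1 then x (n + 1)
    else if 2 ≤ i ∧ i ≤ n - 1 then x (n + i) - x (n + i - 1)
    else if i = n then -x (2 * n - 1) else 0,
   fun i => if i = 2 then x 2
    else if 3 ≤ i ∧ i ≤ n then x i - x (i - 1)
    else if i = n + 1 then -x n else 0)

/-- `z_i = b_{1i} - b_{2,i+1}`. -/
def zb (b1 b2 : ℕ → ℤ) (i : ℕ) : ℤ := b1 i - b2 (i + 1)

/-- Condition `(F_m)`. -/
def Fcond (n : ℕ) (b1 b2 : ℕ → ℤ) (m : ℕ) : Prop :=
  (∀ k, 2 ≤ k → k ≤ m - 1 → (∑ i ∈ Finset.Icc k (m - 1), zb b1 b2 i) ≤ 0) ∧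
  (∀ k, m ≤ k → k ≤ n - 1 → 0 < ∑ i ∈ Finset.Icc m k, zb b1 b2 i)

/-- `β_k(x) = x_k - x_{n+k-1}` for `2 ≤ k ≤ n`, with `β_1 = β_{n+1} = 0`. -/
def betaX (n : ℕ) (x : ℕ → ℤ) (k : ℕ) : ℤ :=
  if 2 ≤ k ∧ k ≤ n then x k - x (n + k - 1) else 0

/-- Condition `(φ_j)`: `β_2,…,β_{j-1} ≤ β_j` and `β_j > β_{j+1},…,β_n`. -/
def phiX (n : ℕ) (x : ℕ → ℤ) (j : ℕ) : Prop :=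
  (∀ k, 2 ≤ k → k ≤ j - 1 → betaX n x k ≤ betaX n x j) ∧
  (∀ k, j + 1 ≤ k → k ≤ n → betaX n x k < betaX n x j)

private lemma tele (f : ℕ → ℤ) : ∀ b a, a ≤ b →
    ∑ i ∈ Finset.Ico a b, (f i - f (i + 1)) = f a - f b := by
  intro b
  induction b with
  | zero => intro a ha; interval_cases a; simp
  | succ b ih =>
    intro a ha
    rcases Nat.lt_or_ge a (b + 1) with h | h
    · have hab : a ≤ b := by omega
      rw [Finset.sum_Ico_succ_top hab, ih a hab]; ring
    · have : a = b + 1 := by omega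
      subst this; simp

/-- `z_i(Ω(x)) = β_i(x) - β_{i+1}(x)` for `2 ≤ i ≤ n-1`; hence
`(F_m)` holds for `Ω(x)` iff `(φ_m)` holds for `x`; moreover exactly one
`j ∈ {2,…,n}` satisfies `(φ_j)`. -/
theorem stmt15 (n : ℕ) (hn : 2 ≤ n) (x : ℕ → ℤ) :
    (∀ i, 2 ≤ i → i ≤ n - 1 →
      zb (Omega n x).1 (Omega n x).2 i = betaX n x i - betaX n x (i + 1)) ∧
    (∀ m, 2 ≤ m → m ≤ n →
      (Fcond n (Omega n x).1 (Omega n x).2 m ↔ phiX n x m)) ∧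
    (∃! j, 2 ≤ j ∧ j ≤ n ∧ phiX n x j) := by
  have hz : ∀ i, 2 ≤ i → i ≤ n - 1 →
      zb (Omega n x).1 (Omega n x).2 i = betaX n x i - betaX n x (i + 1) := by
    intro i h2 h1
    have hb1 : (Omega n x).1 i = x (n + i) - x (n + i - 1) := by
      simp only [Omega]
      rw [if_neg (by omega), if_pos ⟨h2, h1⟩]
    have hb2 : (Omega n x).2 (i + 1) = x (i + 1) - x i := by
      simp only [Omega]
      rw [if_neg (by omega), if_pos (by omega)]
      simp
    rw [zb, hb1, hb2, betaX, betaX, if_pos (by omega), if_pos (by omega)]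
    have e1 : n + (i + 1) - 1 = n + i := by omega
    rw [e1]; ring
  refine ⟨hz, ?_, ?_⟩
  · intro m hm2 hmn
    have hsum1 : ∀ k, 2 ≤ k → k ≤ m - 1 →
        (∑ i ∈ Finset.Icc k (m - 1), zb (Omega n x).1 (Omega n x).2 i)
          = betaX n x k - betaX n x m := by
      intro k hk2 hk
      have he : Finset.Icc k (m - 1) = Finset.Ico k m := by
        rw [← Finset.Ico_add_one_right_eq_Icc]; congr 1; omega
      rw [he]
      refine (Finset.sum_congr rfl fun i hi => ?_).trans (tele (betaX n x) m k (by omega))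
      rw [Finset.mem_Ico] at hi
      exact hz i (by omega) (by omega)
    have hsum2 : ∀ k, m ≤ k → k ≤ n - 1 →
        (∑ i ∈ Finset.Icc m k, zb (Omega n x).1 (Omega n x).2 i)
          = betaX n x m - betaX n x (k + 1) := by
      intro k hk hk'
      have he : Finset.Icc m k = Finset.Ico m (k + 1) := by
        rw [← Finset.Ico_add_one_right_eq_Icc]
      rw [he]
      refine (Finset.sum_congr rfl fun i hi => ?_).trans (tele (betaX n x) (k + 1) m (by omega))
      rw [Finset.mem_Ico] at hi
      exact hz i (by omega) (by omega)
    constructor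
    · rintro ⟨hA, hB⟩
      constructor
      · intro k hk2 hk
        have h := hA k hk2 hk
        rw [hsum1 k hk2 hk] at h
        linarith
      · intro k hk1 hkn
        have hk' : m ≤ k - 1 := by omega
        have hk'' : k - 1 ≤ n - 1 := by omega
        have h := hB (k - 1) hk' hk''
        rw [hsum2 (k - 1) hk' hk''] at h
        have e : k - 1 + 1 = k := by omega
        rw [e] at h
        linarith
    · rintro ⟨hA, hB⟩
      constructor
      · intro k hk2 hk
        rw [hsum1 k hk2 hk]
        linarith [hA k hk2 hk]
      · intro k hk hk'
        rw [hsum2 k hk hk']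
        linarith [hB (k + 1) (by omega) (by omega)]
  · have uniq : ∀ a b, 2 ≤ a → a ≤ n → 2 ≤ b → b ≤ n →
        phiX n x a → phiX n x b → a = b := by
      intro a b ha2 han hb2 hbn hpa hpb
      by_contra hne
      rcases Nat.lt_or_ge a b with h | h
      · have h1 := hpa.2 b (by omega) hbn
        have h2 := hpb.1 a ha2 (by omega)
        linarith
      · have h1 := hpb.2 a (by omega) han
        have h2 := hpa.1 b hb2 (by omega)
        linarith
    have hS : (Finset.Icc 2 n).Nonempty := ⟨2, by simp [hn]⟩
    obtain ⟨b0, hb0S, hb0⟩ := Finset.exists_max_image (Finset.Icc 2 n) (betaX n x) hS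
    haveI : DecidablePred (fun k => ∀ a ∈ Finset.Icc 2 n, betaX n x a ≤ betaX n x k) :=
      fun _ => Finset.decidableDforallFinset
    set T := (Finset.Icc 2 n).filter
      (fun k => ∀ a ∈ Finset.Icc 2 n, betaX n x a ≤ betaX n x k) with hTdef
    have hTne : T.Nonempty := ⟨b0, by
      rw [hTdef, Finset.mem_filter]; exact ⟨hb0S, hb0⟩⟩
    set j := T.max' hTne with hj
    have hjT : j ∈ T := T.max'_mem hTne
    rw [hTdef, Finset.mem_filter, Finset.mem_Icc] at hjT
    obtain ⟨⟨hj2, hjn⟩, hjmax⟩ := hjT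
    have hphi : phiX n x j := by
      constructor
      · intro k hk2 hk
        exact hjmax k (by rw [Finset.mem_Icc]; omega)
      · intro k hk1 hkn
        have hle := hjmax k (by rw [Finset.mem_Icc]; omega)
        rcases lt_or_eq_of_le hle with h | h
        · exact h
        · exfalso
          have hkT : k ∈ T := by
            rw [hTdef, Finset.mem_filter, Finset.mem_Icc]
            exact ⟨⟨by omega, hkn⟩, fun a ha => le_of_le_of_eq (hjmax a ha) h.symm⟩
          have := T.le_max' k hkT
          omega
    exact ⟨j, ⟨hj2, hjn, hphi⟩, fun j' hj' =>
      uniq j' j hj'.1 hj'.2.1 hj2 hjn hj'.2.2 hphi⟩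
end

section
/- Let n ≥ 2 and x = (x_2,…,x_{2n−1}) ∈ ℤ^{2n−2}. Then ε_i(Ω(x)) = ε_i(x) for every 0 ≤ i ≤ n, where on ℤ^{2n−2}: ε_0(x) = x_{n+1} + max_{2≤k≤n}(x_k − x_{n+k−1}); ε_1(x) = −x_{n+1} + x_{n+2}; ε_i(x) = max(x_{n+i+1} − x_{n+i}, −x_i + x_{i+1} + x_{n+i−1} − 2x_{n+i} + x_{n+i+1}) for 2 ≤ i ≤ n−2; ε_{n−1}(x) = max(−x_{2n−1}, −x_{n−1} + x_n + x_{2n−2} − 2x_{2n−1}); ε_n(x) = −x_n + x_{2n−1}. -/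
/-- `Δ(m) = (b_{12} + ⋯ + b_{1,m-1}) + (b_{2,m+1} + ⋯ + b_{2n})`. -/
def DelB (n : ℕ) (p : (ℕ → ℤ) × (ℕ → ℤ)) (m : ℕ) : ℤ :=
  (∑ i ∈ Finset.Icc 2 (m - 1), p.1 i) + (∑ i ∈ Finset.Icc (m + 1) n, p.2 i)

/-- The functions `ε_i` on `B^{2,∞}` for `1 ≤ i ≤ n`. -/
def epsB (n : ℕ) (p : (ℕ → ℤ) × (ℕ → ℤ)) (i : ℕ) : ℤ :=
  if i = 1 then p.1 2
  else if i = n then p.2 (n + 1) - p.1 n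
  else p.1 (i + 1) + max (p.2 (i + 1) - p.1 i) 0

/-- The functions `ε_i` on `ℤ^{2n-2}` for `1 ≤ i ≤ n`. -/
def epsX (n : ℕ) (x : ℕ → ℤ) (i : ℕ) : ℤ :=
  if i = 1 then -x (n + 1) + x (n + 2)
  else if i = n then -x n + x (2 * n - 1)
  else if i = n - 1 then
    max (-x (2 * n - 1)) (-x (n - 1) + x n + x (2 * n - 2) - 2 * x (2 * n - 1))
  else max (x (n + i + 1) - x (n + i))
    (-x i + x (i + 1) + x (n + i - 1) - 2 * x (n + i) + x (n + i + 1))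

lemma Omega1_mid (n : ℕ) (x : ℕ → ℤ) (i : ℕ) (h2 : 2 ≤ i) (h3 : i ≤ n - 1) :
    (Omega n x).1 i = x (n + i) - x (n + i - 1) := by
  simp only [Omega]
  rw [if_neg (by omega), if_pos ⟨h2, h3⟩]

lemma Omega2_mid (n : ℕ) (x : ℕ → ℤ) (i : ℕ) (h2 : 3 ≤ i) (h3 : i ≤ n) :
    (Omega n x).2 i = x i - x (i - 1) := by
  simp only [Omega]
  rw [if_neg (by omega), if_pos ⟨h2, h3⟩]

lemma sumA (n : ℕ) (hn : 2 ≤ n) (x : ℕ → ℤ) :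
    ∀ m, 2 ≤ m → m ≤ n →
      ∑ i ∈ Finset.Icc 2 (m - 1), (Omega n x).1 i = x (n + m - 1) - x (n + 1) := by
  intro m h2 hmn
  induction m, h2 using Nat.le_induction with
  | base => simp [show (2:ℕ) - 1 = 1 from rfl]
  | succ m hm ih =>
    obtain ⟨k, rfl⟩ : ∃ k, m = k + 2 := ⟨m - 2, by omega⟩
    have hs : (k + 2 + 1 : ℕ) - 1 = (k + 1) + 1 := by omega
    rw [hs, Finset.sum_Icc_succ_top (by omega)]
    have ih' := ih (by omega)
    rw [show (k + 2 : ℕ) - 1 = k + 1 from rfl] at ih'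
    rw [ih', Omega1_mid n x (k + 2) (by omega) (by omega)]
    have e1 : n + (k + 2 + 1) - 1 = n + (k + 2) := by omega
    have e2 : n + (k + 2) - 1 = n + (k + 1) := by omega
    have e3 : n + (k + 2) - 1 = n + (k + 2) - 1 := rfl
    rw [e1, e2]
    ring

lemma sumB (n : ℕ) (hn : 2 ≤ n) (x : ℕ → ℤ) :
    ∀ m, 2 ≤ m → m ≤ n → ∑ i ∈ Finset.Icc 2 m, (Omega n x).2 i = x m := by
  intro m h2 hmn
  induction m, h2 using Nat.le_induction with
  | base => simp [Omega]
  | succ m hm ih =>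
    rw [Finset.sum_Icc_succ_top (by omega), ih (by omega),
      Omega2_mid n x (m + 1) (by omega) (by omega)]
    simp

lemma sumB' (n : ℕ) (hn : 2 ≤ n) (x : ℕ → ℤ) (m : ℕ) (h2 : 2 ≤ m) (hmn : m ≤ n) :
    ∑ i ∈ Finset.Icc (m + 1) n, (Omega n x).2 i = x n - x m := by
  have h := Finset.sum_Ioc_consecutive (f := (Omega n x).2) (by omega : (1:ℕ) ≤ m)
    (by omega : m ≤ n)
  have hb1 := sumB n hn x m h2 hmn
  have hb2 := sumB n hn x n hn le_rfl
  rw [show Finset.Icc 2 m = Finset.Ioc 1 m from Finset.Icc_add_one_left_eq_Ioc 1 m] at hb1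
  rw [show Finset.Icc 2 n = Finset.Ioc 1 n from Finset.Icc_add_one_left_eq_Ioc 1 n] at hb2
  rw [show Finset.Icc (m + 1) n = Finset.Ioc m n from Finset.Icc_add_one_left_eq_Ioc m n]
  omega

lemma DelB_eq (n : ℕ) (hn : 2 ≤ n) (x : ℕ → ℤ) (m : ℕ) (h2 : 2 ≤ m) (hmn : m ≤ n) :
    DelB n (Omega n x) m = (x n - x (n + 1)) - (x m - x (n + m - 1)) := by
  rw [DelB, sumA n hn x m h2 hmn, sumB' n hn x m h2 hmn]
  ring

/-- `ε_i(Ω(x)) = ε_i(x)` for all `0 ≤ i ≤ n`, where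
`ε_0(b) = -b_{2,n+1} - min_{2≤m≤n} Δ(m)` and
`ε_0(x) = x_{n+1} + max_{2≤k≤n}(x_k - x_{n+k-1})`. -/
theorem stmt17 (n : ℕ) (hn : 2 ≤ n) (x : ℕ → ℤ)
    (hx : ∀ k, k < 2 ∨ 2 * n - 1 < k → x k = 0) :
    (-(Omega n x).2 (n + 1) -
        (Finset.Icc 2 n).inf' (Finset.nonempty_Icc.mpr hn) (DelB n (Omega n x))
      = x (n + 1) +
        (Finset.Icc 2 n).sup' (Finset.nonempty_Icc.mpr hn) (fun k => x k - x (n + k - 1))) ∧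
    (∀ i, 1 ≤ i → i ≤ n → epsB n (Omega n x) i = epsX n x i) := by
  constructor
  · have hb2 : (Omega n x).2 (n + 1) = -x n := by
      simp only [Omega]
      rw [if_neg (by omega : ¬(n + 1 = 2)), if_neg (by omega : ¬(3 ≤ n + 1 ∧ n + 1 ≤ n))]
      simp
    rw [hb2]
    set g : ℕ → ℤ := fun k => x k - x (n + k - 1) with hg
    have hne := Finset.nonempty_Icc.mpr hn
    have hinf : (Finset.Icc 2 n).inf' hne (DelB n (Omega n x))
        = (x n - x (n + 1)) - (Finset.Icc 2 n).sup' hne g := by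
      have hcongr : (Finset.Icc 2 n).inf' hne (DelB n (Omega n x))
          = (Finset.Icc 2 n).inf' hne (fun m => (x n - x (n + 1)) - g m) := by
        apply Finset.inf'_congr _ rfl
        intro m hm
        rw [Finset.mem_Icc] at hm
        exact DelB_eq n hn x m hm.1 hm.2
      rw [hcongr]
      apply le_antisymm
      · obtain ⟨k, hk, hke⟩ := Finset.exists_mem_eq_sup' hne g
        rw [hke]
        exact Finset.inf'_le _ hk
      · apply Finset.le_inf'
        intro m hm
        have := Finset.le_sup' g hm
        omega
      -- done
    rw [hinf]
    ring
  · intro i hi1 hin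
    by_cases h1 : i = 1
    · subst h1
      by_cases h2 : n = 2
      · subst h2
        have h4 : x 4 = 0 := hx 4 (by omega)
        simp [epsB, epsX, Omega]
        omega
      · simp only [epsB, epsX, if_pos rfl]
        rw [Omega1_mid n x 2 le_rfl (by omega)]
        have e : n + 2 - 1 = n + 1 := by omega
        rw [e]
        simp only [if_true]
        ring
    · by_cases hN : i = n
      · simp only [epsB, epsX, if_neg h1, if_pos hN]
        have hb2 : (Omega n x).2 (n + 1) = -x n := by
          simp only [Omega]
          rw [if_neg (by omega : ¬(n + 1 = 2)), if_neg (by omega : ¬(3 ≤ n + 1 ∧ n + 1 ≤ n))]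
          simp
        have hb1 : (Omega n x).1 n = -x (2 * n - 1) := by
          simp only [Omega]
          rw [if_neg (by omega : ¬(n = 1)), if_neg (by omega : ¬(2 ≤ n ∧ n ≤ n - 1))]
          simp
        rw [hb1, hb2]; ring
      · -- 2 ≤ i ≤ n - 1
        have hi2 : 2 ≤ i := by omega
        have hin1 : i ≤ n - 1 := by omega
        simp only [epsB, epsX, if_neg h1, if_neg hN]
        rw [Omega2_mid n x (i + 1) (by omega) (by omega),
          Omega1_mid n x i hi2 hin1]
        by_cases hlast : i = n - 1
        · rw [if_pos hlast]
          have hb1 : (Omega n x).1 (i + 1) = -x (2 * n - 1) := by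
            simp only [Omega]
            rw [if_neg (by omega), if_neg (by omega), if_pos (by omega)]
          rw [hb1]
          have e2 : n + i - 1 = 2 * n - 2 := by omega
          have e1 : n + i = 2 * n - 1 := by omega
          have e3 : i + 1 - 1 = n - 1 := by omega
          have e5 : i + 1 = n := by omega
          rw [e2, e1, e3, e5]
          omega
        · rw [if_neg hlast]
          rw [Omega1_mid n x (i + 1) (by omega) (by omega)]
          have ea : n + (i + 1) - 1 = n + i := by omega
          have eb : n + (i + 1) = n + i + 1 := by omega
          have ec : i + 1 - 1 = i := by omega
          rw [ea, eb, ec]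
          omega
end

section
/- Let n ≥ 2 and x = (x_2,…,x_{2n−1}) ∈ ℤ^{2n−2}. Then Ω(f̃_i(x)) = f̃_i(Ω(x)) for every 1 ≤ i ≤ n, where on ℤ^{2n−2}: f̃_1 subtracts 1 from the coordinate x_{n+1}; f̃_n subtracts 1 from x_n; and for 2 ≤ i ≤ n−1, f̃_i subtracts 1 from x_{n+i} if β_i(x) > β_{i+1}(x) and subtracts 1 from x_i if β_i(x) ≤ β_{i+1}(x), with β_k(x) = x_k − x_{n+k−1}. -/
/-- The operators `f̃_i` (`1 ≤ i ≤ n`) on `B^{2,∞}`. -/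
def ftB (n i : ℕ) (p : (ℕ → ℤ) × (ℕ → ℤ)) : (ℕ → ℤ) × (ℕ → ℤ) :=
  if i = 1 then
    (fun j => if j = 1 then p.1 1 - 1 else if j = 2 then p.1 2 + 1 else p.1 j, p.2)
  else if i = n then
    (p.1, fun j => if j = n then p.2 n - 1 else if j = n + 1 then p.2 (n + 1) + 1 else p.2 j)
  else if p.2 (i + 1) < p.1 i then
    (fun j => if j = i then p.1 i - 1 else if j = i + 1 then p.1 (i + 1) + 1 else p.1 j, p.2)
  else
    (p.1, fun j => if j = i then p.2 i - 1 else if j = i + 1 then p.2 (i + 1) + 1 else p.2 j)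

/-- The operators `f̃_i` (`1 ≤ i ≤ n`) on `ℤ^{2n-2}`. -/
def ftX (n i : ℕ) (x : ℕ → ℤ) : ℕ → ℤ :=
  if i = 1 then fun k => if k = n + 1 then x k - 1 else x k
  else if i = n then fun k => if k = n then x k - 1 else x k
  else if betaX n x (i + 1) < betaX n x i then fun k => if k = n + i then x k - 1 else x k
  else fun k => if k = i then x k - 1 else x k

set_option maxHeartbeats 2000000 in
/-- `Ω(f̃_i(x)) = f̃_i(Ω(x))` for `1 ≤ i ≤ n`. -/
theorem stmt18 (n : ℕ) (hn : 2 ≤ n) (x : ℕ → ℤ) :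
    ∀ i, 1 ≤ i → i ≤ n → Omega n (ftX n i x) = ftB n i (Omega n x) := by
  intro i hi1 hin
  rcases eq_or_ne i 1 with rfl | h1
  · rw [show ftX n 1 x = fun k => if k = n + 1 then x k - 1 else x k from by
      rw [ftX, if_pos rfl]]
    rw [show ftB n 1 (Omega n x) = (fun j => if j = 1 then (Omega n x).1 1 - 1
        else if j = 2 then (Omega n x).1 2 + 1 else (Omega n x).1 j, (Omega n x).2) from by
      rw [ftB, if_pos rfl]]
    refine Prod.ext (funext fun j => ?_) (funext fun j => ?_) <;>
      simp only [Omega] <;> split_ifs <;> ((try subst_vars); first | rfl | omega | (simp only [show j - 1 + 1 = j from by omega]; omega))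
  · rcases eq_or_ne i n with hni | hnn
    · rw [show ftX n i x = fun k => if k = n then x k - 1 else x k from by
        rw [ftX, if_neg h1, if_pos hni]]
      rw [show ftB n i (Omega n x) = ((Omega n x).1, fun j =>
          if j = n then (Omega n x).2 n - 1
          else if j = n + 1 then (Omega n x).2 (n + 1) + 1 else (Omega n x).2 j) from by
        rw [ftB, if_neg h1, if_pos hni]]
      refine Prod.ext (funext fun j => ?_) (funext fun j => ?_) <;>
        simp only [Omega] <;> split_ifs <;> ((try subst_vars); first | rfl | omega | (simp only [show j - 1 + 1 = j from by omega]; omega))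
    · have hi2 : 2 ≤ i := by omega
      have e1 : (Omega n x).1 i = x (n + i) - x (n + i - 1) := by
        simp only [Omega]; rw [if_neg h1, if_pos ⟨hi2, by omega⟩]
      have e2 : (Omega n x).2 (i + 1) = x (i + 1) - x i := by
        simp only [Omega]
        rw [if_neg (by omega : ¬ i + 1 = 2), if_pos ⟨by omega, by omega⟩]
        congr 1
      have b1 : betaX n x i = x i - x (n + i - 1) := by
        rw [betaX, if_pos ⟨hi2, by omega⟩]
      have b2 : betaX n x (i + 1) = x (i + 1) - x (n + i) := by
        rw [betaX, if_pos ⟨by omega, by omega⟩]; congr 2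
      rcases lt_or_ge (betaX n x (i + 1)) (betaX n x i) with hlt | hle
      · have hc : (Omega n x).2 (i + 1) < (Omega n x).1 i := by
          rw [e1, e2]; rw [b1, b2] at hlt; omega
        rw [show ftX n i x = fun k => if k = n + i then x k - 1 else x k from by
          rw [ftX, if_neg h1, if_neg hnn, if_pos hlt]]
        rw [show ftB n i (Omega n x) = (fun j => if j = i then (Omega n x).1 i - 1
            else if j = i + 1 then (Omega n x).1 (i + 1) + 1 else (Omega n x).1 j,
            (Omega n x).2) from by
          rw [ftB, if_neg h1, if_neg hnn, if_pos hc]]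
        refine Prod.ext (funext fun j => ?_) (funext fun j => ?_) <;>
          simp only [Omega] <;> split_ifs <;> ((try subst_vars); first | rfl | omega | (simp only [show j - 1 + 1 = j from by omega]; omega))
      · have hc : ¬ (Omega n x).2 (i + 1) < (Omega n x).1 i := by
          rw [e1, e2]; rw [b1, b2] at hle; omega
        rw [show ftX n i x = fun k => if k = i then x k - 1 else x k from by
          rw [ftX, if_neg h1, if_neg hnn, if_neg (not_lt.mpr hle)]]
        rw [show ftB n i (Omega n x) = ((Omega n x).1, fun j =>
            if j = i then (Omega n x).2 i - 1
            else if j = i + 1 then (Omega n x).2 (i + 1) + 1 else (Omega n x).2 j) from by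
          rw [ftB, if_neg h1, if_neg hnn, if_neg hc]]
        refine Prod.ext (funext fun j => ?_) (funext fun j => ?_) <;>
          simp only [Omega] <;> split_ifs <;> ((try subst_vars); first | rfl | omega | (simp only [show j - 1 + 1 = j from by omega]; omega))
end
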